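/- Let G be a minimum counterexample to the statement 'every odd-hole-free graph H with Δ(H) ≥ 7 satisfies χ(H) ≤ max{Δ(H) − 1, ω(H)}', and let u be a vertex of G with degree Δ(G). Then there is a subset S of N(u) with |S| = Δ(G) − 2 such that S ∪ {u} is a clique of G of size Δ(G) − 1. -/

import Mathlib

/-- `G` has an *odd hole*: an induced cycle of odd length at least 5
(a hole is an induced cycle of length at least 4, so odd holes have length at least 5). -/
def SimpleGraph.HasOddHole {V : Type*} (G : SimpleGraph V) : Prop :=
  ∃ n : ℕ, Odd n ∧ 5 ≤ n ∧ Nonempty (SimpleGraph.cycleGraph n ↪g G)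

/-!
Let `k = max (Δ - 1) ω`, so `G` is not `k`-colourable. If `G - x` is `k`-colourable, every colour
occurs on `N(x)`, and two neighbours of `x` whose colours occur only once on `N(x)` are adjacent:
otherwise either the Kempe chain of one of them does not reach the other, and swapping its two
colours frees a colour for `x`, or a shortest Kempe path between them closes up through `x` into an
odd hole. Counting colour classes, at least `2k - deg x` neighbours of `x` carry a unique colour,
so they form with `x` a clique. As `ω ≤ k`, this forces `deg x > k`.

By minimality `G - u` is `k`-colourable unless deleting `u` drops the maximum degree below `7`.
Then a non-neighbour `w` of `u` would have degree at most `6` while `G - w` is `k`-colourable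
(because `u` keeps its degree there), which is impossible; and if `u` is adjacent to every other
vertex, `G - u` has `Δ` vertices and, as `G` is not complete, a non-edge, so `Δ - 1` colours
suffice. For `x = u` the clique above has at least `Δ - 1` vertices.
-/

open Finset

theorem Finset.two_mul_card_le_card_filter_unique_add_card {α β : Type*} [DecidableEq α]
    [DecidableEq β] [Fintype β] (N : Finset α) (f : α → β) (hf : ∀ b, ∃ z ∈ N, f z = b) :
    2 * Fintype.card β ≤ #{v ∈ N | ∀ z ∈ N, f z = f v → z = v} + #N := by
  set U := N.filter fun v ↦ ∀ z ∈ N, f z = f v → z = v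
  set D := N.filter fun v ↦ ¬ ∀ z ∈ N, f z = f v → z = v
  have hsplit : #U + #D = #N := card_filter_add_card_filter_not _
  have hD : 2 * #(D.image f) ≤ #D := by
    refine mul_card_image_le_card D 2 fun b hb ↦ ?_
    obtain ⟨v, hv, rfl⟩ := mem_image.mp hb
    obtain ⟨hvN, hvU⟩ := mem_filter.mp hv
    push Not at hvU
    obtain ⟨z, hzN, hfz, hzv⟩ := hvU
    have hzD : z ∈ D := mem_filter.mpr ⟨hzN, fun h ↦ hzv.symm (h v hvN hfz.symm)⟩
    calc 2 = #{z, v} := (card_pair hzv).symm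
      _ ≤ #{a ∈ D | f a = f v} := card_le_card <| by
        simp [insert_subset_iff, hv, hzD, hfz]
  have hcover : Fintype.card β ≤ #U + #(D.image f) :=
    calc Fintype.card β = #(U.image f ∪ D.image f) := by
          rw [← card_univ]
          congr 1
          refine (eq_univ_of_forall fun b ↦ ?_).symm
          obtain ⟨z, hz, rfl⟩ := hf b
          by_cases hzU : ∀ y ∈ N, f y = f z → y = z
          · exact mem_union_left _ (mem_image_of_mem f (mem_filter.mpr ⟨hz, hzU⟩))
          · exact mem_union_right _ (mem_image_of_mem f (mem_filter.mpr ⟨hz, hzU⟩))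
      _ ≤ #(U.image f) + #(D.image f) := card_union_le _ _
      _ ≤ #U + #(D.image f) := by grw [card_image_le]
  omega

namespace SimpleGraph

variable {V : Type*} {G : SimpleGraph V}

theorem HasOddHole.of_embedding {W : Type*} {H : SimpleGraph W} (f : H ↪g G)
    (h : H.HasOddHole) : G.HasOddHole := by
  obtain ⟨n, hn, h5, ⟨e⟩⟩ := h
  exact ⟨n, hn, h5, ⟨f.comp e⟩⟩

theorem cycleGraph_adj_of_lt {n : ℕ} {i j : Fin n} (hij : i < j) :
    (cycleGraph n).Adj i j ↔ j.val = i.val + 1 ∨ (i.val = 0 ∧ j.val = n - 1) := by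
  rw [cycleGraph_adj', Fin.coe_sub_iff_lt.mpr hij, Fin.coe_sub_iff_le.mpr hij.le]
  have := j.isLt
  omega

theorem hasOddHole_of_cycle {n : ℕ} (hn : Odd n) (h5 : 5 ≤ n) (f : ℕ → V)
    (hinj : ∀ i j, i < j → j < n → f i ≠ f j)
    (hadj : ∀ i j, i < j → j < n → (G.Adj (f i) (f j) ↔ j = i + 1 ∨ (i = 0 ∧ j = n - 1))) :
    G.HasOddHole := by
  have hinj' : Function.Injective fun i : Fin n ↦ f i := by
    intro i j hij
    by_contra hne
    rcases lt_or_gt_of_ne hne with h | h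
    · exact hinj i j h j.isLt hij
    · exact hinj j i h i.isLt hij.symm
  refine ⟨n, hn, h5, ⟨⟨⟨fun i ↦ f i, hinj'⟩, fun {i j} ↦ ?_⟩⟩⟩
  rcases lt_trichotomy i j with h | rfl | h
  · exact (hadj i j h j.isLt).trans (cycleGraph_adj_of_lt h).symm
  · simp
  · rw [G.adj_comm, (cycleGraph n).adj_comm]
    exact (hadj j i h i.isLt).trans (cycleGraph_adj_of_lt h).symm

theorem hasOddHole_of_path_of_apex {L : ℕ} (hL : Odd L) (h3 : 3 ≤ L) (g : ℕ → V) (x : V)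
    (hne : ∀ i ≤ L, g i ≠ x) (hinj : ∀ i ≤ L, ∀ j ≤ L, g i = g j → i = j)
    (hpath : ∀ i j, i < j → j ≤ L → (G.Adj (g i) (g j) ↔ j = i + 1))
    (hapex : ∀ i ≤ L, (G.Adj (g i) x ↔ i = 0 ∨ i = L)) : G.HasOddHole := by
  refine hasOddHole_of_cycle (n := L + 2) (by simpa [Nat.odd_add] using hL) (by omega)
    (fun i ↦ if i = L + 1 then x else g i) ?_ ?_
  · intro i j hij hj
    simp only [show i ≠ L + 1 by omega, if_false]
    split_ifs with h
    · exact hne i (by omega)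
    · exact fun h' ↦ by have := hinj i (by omega) j (by omega) h'; omega
  · intro i j hij hj
    simp only [show i ≠ L + 1 by omega, if_false]
    split_ifs with h
    · rw [hapex i (by omega)]; omega
    · rw [hpath i j hij (by omega)]; omega

namespace Walk

variable {u v : V}

theorem dist_getVert_of_length_eq_dist {p : G.Walk u v} (hp : p.length = G.dist u v) {i : ℕ}
    (hi : i ≤ p.length) : G.dist u (p.getVert i) = i := by
  rw [← length_eq_dist_of_subwalk hp (p.isSubwalk_take i), take_length, min_eq_left hi]

theorem getVert_injOn_of_length_eq_dist {p : G.Walk u v} (hp : p.length = G.dist u v) {i j : ℕ}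
    (hi : i ≤ p.length) (hj : j ≤ p.length) (h : p.getVert i = p.getVert j) : i = j := by
  rw [← dist_getVert_of_length_eq_dist hp hi, ← dist_getVert_of_length_eq_dist hp hj, h]

theorem not_adj_getVert_of_length_eq_dist {p : G.Walk u v} (hp : p.length = G.dist u v)
    {i j : ℕ} (hij : i + 2 ≤ j) (hj : j ≤ p.length) : ¬ G.Adj (p.getVert i) (p.getVert j) := by
  intro hadj
  have := dist_le ((p.take i).concat hadj)
  rw [dist_getVert_of_length_eq_dist hp hj, length_concat, take_length] at this
  omega

end Walk

section Kempe

variable {α : Type*}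

def kempeGraph (G : SimpleGraph V) (c : V → α) (a b : α) : SimpleGraph V where
  Adj p q := G.Adj p q ∧ (c p = a ∨ c p = b) ∧ (c q = a ∨ c q = b)
  symm := ⟨fun _ _ h ↦ ⟨h.1.symm, h.2.2, h.2.1⟩⟩
  loopless := ⟨fun _ h ↦ G.irrefl h.1⟩

variable {a b : α}

theorem Coloring.color_getVert_kempeGraph (c : G.Coloring α) {u v : V}
    (w : (kempeGraph G c a b).Walk u v) (hu : c u = a) {i : ℕ} (hi : i ≤ w.length) :
    c (w.getVert i) = if Even i then a else b := by
  induction i with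
  | zero => simpa using hu
  | succ i ih =>
    have hadj := w.adj_getVert_succ (by omega : i < w.length)
    have hne := c.valid hadj.1
    rw [ih (by omega)] at hne
    rcases hadj.2.2 with h | h <;> by_cases he : Even i <;>
      simp_all [Nat.even_add_one, eq_comm]

theorem Coloring.adj_getVert_iff_of_kempeGraph_length_eq_dist (c : G.Coloring α) {u v : V}
    {w : (kempeGraph G c a b).Walk u v} (hw : w.length = (kempeGraph G c a b).dist u v)
    (hu : c u = a) {i j : ℕ} (hij : i < j) (hj : j ≤ w.length) :
    G.Adj (w.getVert i) (w.getVert j) ↔ j = i + 1 := by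
  constructor
  · intro hadj
    by_contra hne
    have hcol : ∀ k ≤ w.length, c (w.getVert k) = a ∨ c (w.getVert k) = b := fun k hk ↦ by
      rw [c.color_getVert_kempeGraph w hu hk]
      split_ifs <;> simp
    exact Walk.not_adj_getVert_of_length_eq_dist hw (by omega) hj
      ⟨hadj, hcol i (by omega), hcol j hj⟩
  · rintro rfl
    exact (w.adj_getVert_succ (by omega)).1

open scoped Classical in
noncomputable def Coloring.kempeSwap [DecidableEq α] (c : G.Coloring α) (a b : α) (v : V) :
    G.Coloring α :=
  Coloring.mk
    (fun w ↦ if (kempeGraph G c a b).Reachable v w then Equiv.swap a b (c w) else c w) <| by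
    have key : ∀ ⦃p q⦄, G.Adj p q → (kempeGraph G c a b).Reachable v p →
        ¬ (kempeGraph G c a b).Reachable v q → Equiv.swap a b (c p) ≠ c q := by
      intro p q hpq hp hq h
      by_cases hcp : c p = a ∨ c p = b
      · have hcq : c q = a ∨ c q = b := by
          rw [← h]
          rcases hcp with h' | h' <;> simp [h']
        exact hq (hp.trans (Adj.reachable ⟨hpq, hcp, hcq⟩))
      · rw [not_or] at hcp
        rw [Equiv.swap_apply_of_ne_of_ne hcp.1 hcp.2] at h
        exact c.valid hpq h
    intro p q hpq
    by_cases hp : (kempeGraph G c a b).Reachable v p <;>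
      by_cases hq : (kempeGraph G c a b).Reachable v q <;> simp only [hp, hq, if_true, if_false]
    · exact (Equiv.swap a b).injective.ne (c.valid hpq)
    · exact key hpq hp hq
    · exact (key hpq.symm hq hp).symm
    · exact c.valid hpq

open scoped Classical in
theorem Coloring.kempeSwap_apply [DecidableEq α] (c : G.Coloring α) (a b : α) (v w : V) :
    c.kempeSwap a b v w =
      if (kempeGraph G c a b).Reachable v w then Equiv.swap a b (c w) else c w :=
  rfl

end Kempe

section PartialColoring

variable {α : Type*} {x : V}

def Coloring.extend [DecidableEq V] (c : (G.deleteIncidenceSet x).Coloring α) (a : α)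
    (ha : ∀ z, G.Adj x z → c z ≠ a) : G.Coloring α :=
  Coloring.mk (Function.update c x a) <| by
    intro p q hpq
    by_cases hp : p = x <;> by_cases hq : q = x
    · exact absurd (hp.trans hq.symm) hpq.ne
    · subst hp; simpa [hq] using (ha q hpq).symm
    · subst hq; simpa [hp] using ha p hpq.symm
    · simpa [hp, hq] using c.valid (deleteIncidenceSet_adj.mpr ⟨hpq, hp, hq⟩)

theorem adj_of_reachable_kempeGraph (hfree : ¬ G.HasOddHole)
    (c : (G.deleteIncidenceSet x).Coloring α) {v₁ v₂ : V} (h₁ : G.Adj x v₁) (h₂ : G.Adj x v₂)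
    (hc : c v₁ ≠ c v₂) (hu₁ : ∀ z, G.Adj x z → c z = c v₁ → z = v₁)
    (hu₂ : ∀ z, G.Adj x z → c z = c v₂ → z = v₂)
    (hr : (kempeGraph (G.deleteIncidenceSet x) c (c v₁) (c v₂)).Reachable v₁ v₂) : G.Adj v₁ v₂ := by
  by_contra hnadj
  obtain ⟨w, hw⟩ := hr.exists_walk_length_eq_dist
  set L := w.length
  have hend : w.getVert L = v₂ := w.getVert_length
  have hne : ∀ i ≤ L, w.getVert i ≠ x := by
    intro i hi
    rcases hi.lt_or_eq with hi | rfl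
    · exact (deleteIncidenceSet_adj.mp (w.adj_getVert_succ hi).1).2.1
    · rw [hend]; exact h₂.ne'
  have hcol : ∀ i ≤ L, c (w.getVert i) = if Even i then c v₁ else c v₂ :=
    fun i hi ↦ c.color_getVert_kempeGraph w rfl hi
  have hinj : ∀ i ≤ L, ∀ j ≤ L, w.getVert i = w.getVert j → i = j :=
    fun i hi j hj ↦ Walk.getVert_injOn_of_length_eq_dist hw hi hj
  have hpath : ∀ i j, i < j → j ≤ L → (G.Adj (w.getVert i) (w.getVert j) ↔ j = i + 1) := by
    intro i j hij hj
    rw [← c.adj_getVert_iff_of_kempeGraph_length_eq_dist hw rfl hij hj, deleteIncidenceSet_adj]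
    simp [hne i (by omega), hne j hj]
  have hapex : ∀ i ≤ L, (G.Adj (w.getVert i) x ↔ i = 0 ∨ i = L) := by
    intro i hi
    constructor
    · intro hadj
      have := hcol i hi
      split_ifs at this
      · exact .inl (hinj i hi 0 (by omega) (by simpa using hu₁ _ hadj.symm this))
      · exact .inr (hinj i hi L le_rfl ((hu₂ _ hadj.symm this).trans hend.symm))
    · rintro (rfl | rfl)
      · simpa using h₁.symm
      · rw [hend]; exact h₂.symm
  have hodd : Odd L := by
    by_contra he
    have := hcol L le_rfl
    rw [if_pos (Nat.not_odd_iff_even.mp he), hend] at this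
    exact hc this.symm
  have hL : L ≠ 1 := fun h1 ↦ hnadj <| by
    simpa [← h1, hend] using (hpath 0 1 one_pos h1.ge).mpr rfl
  exact hfree (hasOddHole_of_path_of_apex hodd (by obtain ⟨m, hm⟩ := hodd; omega) _ x hne hinj
    hpath hapex)

theorem reachable_kempeGraph_of_uncolorable [DecidableEq V] [DecidableEq α]
    (hnc : ¬ Nonempty (G.Coloring α)) (c : (G.deleteIncidenceSet x).Coloring α) {v₁ v₂ : V}
    (hu₁ : ∀ z, G.Adj x z → c z = c v₁ → z = v₁) (hu₂ : ∀ z, G.Adj x z → c z = c v₂ → z = v₂) :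
    (kempeGraph (G.deleteIncidenceSet x) c (c v₁) (c v₂)).Reachable v₁ v₂ := by
  by_contra hr
  refine hnc ⟨(c.kempeSwap (c v₁) (c v₂) v₁).extend (c v₁) fun z hz h ↦ ?_⟩
  rw [Coloring.kempeSwap_apply] at h
  split_ifs at h with hz₁
  · rw [Equiv.swap_apply_eq_iff, Equiv.swap_apply_left] at h
    exact hr (hu₂ z hz h ▸ hz₁)
  · exact hz₁ (hu₁ z hz h ▸ Reachable.refl _)

theorem Colorable.deleteIncidenceSet_of_induce [DecidableEq V] {k : ℕ} (hk : 0 < k)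
    (h : (G.induce {v | v ≠ x}).Colorable k) : (G.deleteIncidenceSet x).Colorable k := by
  obtain ⟨c⟩ := h
  refine ⟨Coloring.mk (fun v ↦ if hv : v = x then ⟨0, hk⟩ else c ⟨v, hv⟩) fun {p q} hpq ↦ ?_⟩
  obtain ⟨hpq, hp, hq⟩ := deleteIncidenceSet_adj.mp hpq
  simpa [hp, hq] using c.valid (show (G.induce {v | v ≠ x}).Adj ⟨p, hp⟩ ⟨q, hq⟩ from hpq)

theorem exists_isClique_insert_of_not_colorable [Fintype V] [DecidableEq V] [DecidableRel G.Adj]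
    (hfree : ¬ G.HasOddHole) {k : ℕ} (hnc : ¬ G.Colorable k)
    (c : (G.deleteIncidenceSet x).Coloring (Fin k)) :
    ∃ S ⊆ G.neighborFinset x, 2 * k ≤ #S + G.degree x ∧ G.IsClique (insert x S : Finset V) := by
  have hall : ∀ a, ∃ z ∈ G.neighborFinset x, c z = a := by
    by_contra! h
    obtain ⟨a, ha⟩ := h
    exact hnc ⟨c.extend a fun z hz ↦ ha z (mem_neighborFinset _ _ _ |>.mpr hz)⟩
  refine ⟨{v ∈ G.neighborFinset x | ∀ z ∈ G.neighborFinset x, c z = c v → z = v},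
    filter_subset _ _, ?_, ?_⟩
  · simpa [card_neighborFinset_eq_degree] using
      two_mul_card_le_card_filter_unique_add_card (G.neighborFinset x) c hall
  · rw [coe_insert, isClique_insert]
    simp only [coe_filter, mem_neighborFinset]
    refine ⟨fun v₁ hv₁ v₂ hv₂ hne ↦ ?_, fun v hv _ ↦ hv.1⟩
    have hc : c v₁ ≠ c v₂ := fun h ↦ hne (hv₂.2 v₁ hv₁.1 h)
    exact adj_of_reachable_kempeGraph hfree c hv₁.1 hv₂.1 hc hv₁.2 hv₂.2
      (reachable_kempeGraph_of_uncolorable hnc c hv₁.2 hv₂.2)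

end PartialColoring

section Critical

theorem colorable_card_sub_one_of_not_adj {W : Type*} [Fintype W] [DecidableEq W]
    {H : SimpleGraph W} {a b : W} (hab : a ≠ b) (h : ¬ H.Adj a b) :
    H.Colorable (Fintype.card W - 1) := by
  suffices H.Coloring (univ.erase b) by simpa using this.colorable
  exact Coloring.mk (fun v ↦ if hv : v ≠ b then ⟨v, by simp [hv]⟩ else ⟨a, by simp [hab]⟩)
    (by grind [Adj.ne', adj_symm])

variable [Fintype V] [DecidableEq V] [DecidableRel G.Adj] {k : ℕ} {x : V}

theorem lt_degree_of_not_colorable (hfree : ¬ G.HasOddHole) (hnc : ¬ G.Colorable k)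
    (hω : G.cliqueNum ≤ k) (hx : (G.deleteIncidenceSet x).Colorable k) : k < G.degree x := by
  obtain ⟨c⟩ := hx
  obtain ⟨S, hSN, hS, hcl⟩ := exists_isClique_insert_of_not_colorable hfree hnc c
  have hxS : x ∉ S := fun h ↦ G.notMem_neighborFinset_self x (hSN h)
  have := hcl.card_le_cliqueNum
  rw [card_insert_of_notMem hxS] at this
  omega

theorem degree_le_maxDegree_induce_of_not_adj {u w : V} (hwu : w ≠ u) (h : ¬ G.Adj u w) :
    G.degree w ≤ (G.induce {v | v ≠ u}).maxDegree := by
  rw [← degree_induce_of_neighborSet_subset (s := {v | v ≠ u}) (v := ⟨w, hwu⟩)]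
  · exact degree_le_maxDegree _ _
  · rintro v hv rfl
    exact h hv.symm

theorem colorable_deleteIncidenceSet_of_forall_adj (hnc : ¬ G.Colorable k)
    (hω : G.cliqueNum ≤ k) {u : V} (hk : G.degree u - 1 ≤ k) (hdom : ∀ w ≠ u, G.Adj u w) :
    (G.deleteIncidenceSet u).Colorable k := by
  have hdeg : G.degree u = Fintype.card V - 1 := by
    rw [← card_neighborFinset_eq_degree, ← card_univ, ← card_erase_of_mem (mem_univ u)]
    congr 1
    ext w
    simp only [mem_neighborFinset, mem_erase, mem_univ, and_true]
    exact ⟨Adj.ne', hdom w⟩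
  by_cases hcomplete : ∀ p q : V, p ≠ q → G.Adj p q
  · have := (show G.IsClique (univ : Finset V) from fun p _ q _ ↦ hcomplete p q).card_le_cliqueNum
    exact absurd (G.colorable_of_fintype.mono (by simpa using this.trans hω)) hnc
  push Not at hcomplete
  obtain ⟨p, q, hpq, hnadj⟩ := hcomplete
  have hp : p ≠ u := by rintro rfl; exact hnadj (hdom q hpq.symm)
  have hq : q ≠ u := by rintro rfl; exact hnadj (hdom p hpq).symm
  have := colorable_card_sub_one_of_not_adj (H := G.induce {v | v ≠ u})
    (a := ⟨p, hp⟩) (b := ⟨q, hq⟩) (by simpa using hpq) hnadj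
  have h2 : 2 ≤ G.degree u := by
    rw [← card_neighborFinset_eq_degree, ← card_pair hpq]
    exact card_le_card (by simp [insert_subset_iff, hdom p hp, hdom q hq])
  refine Colorable.deleteIncidenceSet_of_induce (by omega) (this.mono ?_)
  simp only [Set.coe_ofPred, Fintype.card_subtype_compl, Fintype.card_unique]
  omega

theorem colorable_deleteIncidenceSet_of_degree_eq_maxDegree (hfree : ¬ G.HasOddHole)
    (hnc : ¬ G.Colorable k) (hω : G.cliqueNum ≤ k) (hΔ : 7 ≤ G.maxDegree)
    (hk : G.maxDegree - 1 ≤ k)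
    (hsub : ∀ w, 7 ≤ (G.induce {v | v ≠ w}).maxDegree → (G.deleteIncidenceSet w).Colorable k)
    {u : V} (hu : G.degree u = G.maxDegree) : (G.deleteIncidenceSet u).Colorable k := by
  by_cases hdom : ∀ w ≠ u, G.Adj u w
  · exact colorable_deleteIncidenceSet_of_forall_adj hnc hω (by omega) hdom
  push Not at hdom
  obtain ⟨w, hwu, hnadj⟩ := hdom
  by_cases h7 : 7 ≤ (G.induce {v | v ≠ u}).maxDegree
  · exact hsub u h7
  have hw := degree_le_maxDegree_induce_of_not_adj hwu hnadj
  have hu7 := degree_le_maxDegree_induce_of_not_adj hwu.symm fun h ↦ hnadj h.symm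
  have := lt_degree_of_not_colorable hfree hnc hω (hsub w (by omega))
  omega

end Critical

end SimpleGraph

open SimpleGraph

theorem SimpleGraph.colorable_deleteIncidenceSet_of_minimal {V : Type} [Fintype V]
    [DecidableEq V] {G : SimpleGraph V} [DecidableRel G.Adj] (hfree : ¬ G.HasOddHole)
    (hmin : ∀ (W : Type) [Fintype W] (H : SimpleGraph W) [DecidableRel H.Adj],
      Fintype.card W < Fintype.card V → ¬ H.HasOddHole → 7 ≤ H.maxDegree →
      H.chromaticNumber ≤ (max (H.maxDegree - 1) H.cliqueNum : ℕ))
    {w : V} (hw : 7 ≤ (G.induce {v | v ≠ w}).maxDegree) :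
    (G.deleteIncidenceSet w).Colorable (max (G.maxDegree - 1) G.cliqueNum) := by
  have hχ := hmin _ (G.induce {v | v ≠ w}) (Fintype.card_subtype_lt (x := w) (by simp))
    (fun h ↦ hfree (h.of_embedding (Embedding.induce _))) hw
  have hΔ : (G.induce {v | v ≠ w}).maxDegree ≤ G.maxDegree :=
    (Embedding.induce _).toCopy.maxDegree_mono
  have hle : max ((G.induce {v | v ≠ w}).maxDegree - 1) (G.induce {v | v ≠ w}).cliqueNum ≤
      max (G.maxDegree - 1) G.cliqueNum :=
    max_le_max (by omega) (cliqueNum_induce_le _)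
  refine Colorable.deleteIncidenceSet_of_induce (by omega) ?_
  exact chromaticNumber_le_iff_colorable.mp (hχ.trans (by exact_mod_cast hle))

/-- In a minimum counterexample `G` to "every odd-hole-free graph `H` with
`Δ(H) ≥ 7` satisfies `χ(H) ≤ max (Δ(H) - 1) (ω(H))`", for any vertex `u` of maximum degree
there is a set `S ⊆ N(u)` with `|S| = Δ(G) - 2` such that `S ∪ {u}` is a clique of size
`Δ(G) - 1`. -/
theorem statement_7 {V : Type} [Fintype V] [DecidableEq V]
    (G : SimpleGraph V) [DecidableRel G.Adj]
    (hfree : ¬ G.HasOddHole) (hΔ : 7 ≤ G.maxDegree)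
    (hcex : (max (G.maxDegree - 1) G.cliqueNum : ℕ) < G.chromaticNumber)
    (hmin : ∀ (W : Type) [Fintype W] (H : SimpleGraph W) [DecidableRel H.Adj],
      Fintype.card W < Fintype.card V → ¬ H.HasOddHole → 7 ≤ H.maxDegree →
      H.chromaticNumber ≤ (max (H.maxDegree - 1) H.cliqueNum : ℕ))
    (u : V) (hu : G.degree u = G.maxDegree) :
    ∃ S : Finset V, S ⊆ G.neighborFinset u ∧ S.card = G.maxDegree - 2 ∧
      G.IsNClique (G.maxDegree - 1) (insert u S) := by
  have hnc : ¬ G.Colorable (max (G.maxDegree - 1) G.cliqueNum) :=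
    fun h ↦ hcex.not_ge h.chromaticNumber_le
  have hk := le_max_left (G.maxDegree - 1) G.cliqueNum
  obtain ⟨c⟩ := colorable_deleteIncidenceSet_of_degree_eq_maxDegree hfree hnc
    (le_max_right _ _) hΔ hk (fun _ ↦ colorable_deleteIncidenceSet_of_minimal hfree hmin) hu
  obtain ⟨S, hSN, hS, hcl⟩ := exists_isClique_insert_of_not_colorable hfree hnc c
  obtain ⟨T, hTS, hT⟩ := exists_subset_card_eq (show G.maxDegree - 2 ≤ #S by omega)
  have huT : u ∉ T := fun h ↦ G.notMem_neighborFinset_self u (hSN (hTS h))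
  refine ⟨T, hTS.trans hSN, hT, hcl.subset (coe_subset.mpr (insert_subset_insert u hTS)), ?_⟩
  rw [card_insert_of_notMem huT, hT]
  omega
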